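/- Under the hypotheses of the discretization proposition (each region contains at most one robot and has ρ-mass at most 1/N), the discretized error μ satisfies μ ≥ 2 − 2N·max_i ∫_{Ω_i} ρ dz; in particular if every region has ρ-mass at most ε/N then μ ≥ 2 − 2ε, so μ approaches its theoretical maximum 2 as the regions shrink, regardless of robot positions. -/

import Mathlib

/-!
With `mᵢ` the mass of region `i` and `nᵢ ∈ {0, 1}` its number of robots, each term satisfies
`|mᵢ - nᵢ/N| ≥ mᵢ + nᵢ/N - 2 nᵢ mᵢ`. Summing, and using `∑ mᵢ = 1`, `∑ nᵢ = N` and `mᵢ ≤ c`,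
gives `μ ≥ 2 - 2 ∑ nᵢ mᵢ ≥ 2 - 2 N c`.
-/

open MeasureTheory Finset

theorem add_div_sub_two_mul_le_abs_sub (m D : ℝ) {n : ℕ} (hn : n ≤ 1) :
    m + n / D - 2 * n * m ≤ |m - n / D| := by
  interval_cases n
  · simpa using le_abs_self m
  · simp only [Nat.cast_one]
    linarith [neg_le_abs (m - 1 / D)]

theorem two_sub_two_mul_le_sum_abs_sub {ι : Type*} [Fintype ι] {m : ι → ℝ} {n : ι → ℕ}
    {N : ℕ} (hN : 0 < N) (hm : ∑ i, m i = 1) (hn : ∑ i, n i = N) (hn1 : ∀ i, n i ≤ 1)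
    {c : ℝ} (hc : ∀ i, m i ≤ c) :
    2 - 2 * N * c ≤ ∑ i, |m i - n i / N| := by
  have hnN : ∑ i, (n i : ℝ) / N = 1 := by
    rw [← sum_div, ← Nat.cast_sum, hn, div_self (by positivity)]
  have hnm : ∑ i, (n i : ℝ) * m i ≤ N * c :=
    calc ∑ i, (n i : ℝ) * m i ≤ ∑ i, (n i : ℝ) * c :=
          sum_le_sum fun i _ => mul_le_mul_of_nonneg_left (hc i) (Nat.cast_nonneg _)
      _ = N * c := by rw [← sum_mul, ← Nat.cast_sum, hn]
  calc 2 - 2 * N * c ≤ ∑ i, m i + ∑ i, (n i : ℝ) / N - 2 * ∑ i, (n i : ℝ) * m i := by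
        rw [hm, hnN]; linarith
    _ = ∑ i, (m i + n i / N - 2 * n i * m i) := by
        simp only [sum_add_distrib, sum_sub_distrib, mul_sum, mul_assoc]
    _ ≤ ∑ i, |m i - n i / N| :=
        sum_le_sum fun i _ => add_div_sub_two_mul_le_abs_sub _ _ (hn1 i)

open Classical in
theorem sum_card_filter_mem_eq_card {ι κ α : Type*} [Fintype ι] [Fintype κ] {A : ι → Set α}
    (hA : Pairwise fun i j => Disjoint (A i) (A j)) {x : κ → α} (hx : ∀ j, x j ∈ ⋃ i, A i) :
    ∑ i, #{j | x j ∈ A i} = Fintype.card κ := by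
  choose region hregion using fun j => Set.mem_iUnion.mp (hx j)
  have hmem : ∀ i j, x j ∈ A i ↔ region j = i := fun i j =>
    ⟨fun h => by_contra fun hne => Set.disjoint_left.mp (hA hne) (hregion j) h,
      fun h => h ▸ hregion j⟩
  simp only [hmem]
  exact (card_eq_sum_card_fiberwise fun j _ => mem_univ (region j)).symm

theorem sum_setIntegral_eq_of_iUnion_eq {X ι : Type*} [MeasurableSpace X] {μ : Measure X}
    [Fintype ι] {A : ι → Set X} {Ω : Set X} (hA : ∀ i, MeasurableSet (A i))
    (hdisj : Pairwise fun i j => Disjoint (A i) (A j)) (hcover : ⋃ i, A i = Ω) {f : X → ℝ}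
    (hf : IntegrableOn f Ω μ) : ∑ i, ∫ z in A i, f z ∂μ = ∫ z in Ω, f z ∂μ := by
  rw [← integral_iUnion_fintype hA hdisj fun i => hf.mono_set (hcover ▸ Set.subset_iUnion A i),
    hcover]

open Classical in
theorem discretized_error_lower_bound_general {d M N : ℕ} (hN : 0 < N)
    (Ω : Set (Fin d → ℝ)) (A : Fin M → Set (Fin d → ℝ))
    (hAmeas : ∀ i, MeasurableSet (A i))
    (hdisj : Pairwise fun i j => Disjoint (A i) (A j))
    (hcover : (⋃ i, A i) = Ω)
    (ρ : (Fin d → ℝ) → ℝ)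
    (hρint : IntegrableOn ρ Ω) (hρ1 : ∫ z in Ω, ρ z = 1)
    (x : Fin N → (Fin d → ℝ)) (hxΩ : ∀ j, x j ∈ Ω)
    (hone : ∀ i, ({j | x j ∈ A i} : Finset (Fin N)).card ≤ 1)
    (c : ℝ) (hc : ∀ i, ∫ z in A i, ρ z ≤ c) :
    2 - 2 * N * c ≤
      ∑ i : Fin M, |(∫ z in A i, ρ z) -
        (({j | x j ∈ A i} : Finset (Fin N)).card : ℝ) / N| := by
  refine two_sub_two_mul_le_sum_abs_sub hN ?_ ?_ hone hc
  · rw [sum_setIntegral_eq_of_iUnion_eq hAmeas hdisj hcover hρint, hρ1]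
  · simpa using sum_card_filter_mem_eq_card hdisj (x := x) (hcover ▸ hxΩ)

open Classical in
/-- Under the hypotheses of the discretization proposition (each region contains at most
one robot and has `ρ`-mass at most `1/N`, bounded by `c`), the discretized error
satisfies `μ ≥ 2 − 2N·c` for any uniform bound `c` on the region masses; in particular
if every region has mass at most `ε/N` then `μ ≥ 2 − 2ε`. -/
theorem discretized_error_lower_bound {d M N : ℕ} (hN : 0 < N)
    (Ω : Set (Fin d → ℝ)) (A : Fin M → Set (Fin d → ℝ))
    (hAmeas : ∀ i, MeasurableSet (A i))
    (hdisj : Pairwise fun i j => Disjoint (A i) (A j))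
    (hcover : (⋃ i, A i) = Ω)
    (ρ : (Fin d → ℝ) → ℝ) (hρ0 : ∀ z ∈ Ω, 0 ≤ ρ z)
    (hρint : IntegrableOn ρ Ω) (hρ1 : ∫ z in Ω, ρ z = 1)
    (x : Fin N → (Fin d → ℝ)) (hxΩ : ∀ j, x j ∈ Ω) (hxdist : Function.Injective x)
    (hone : ∀ i, ({j | x j ∈ A i} : Finset (Fin N)).card ≤ 1)
    (hsmall : ∀ i, ∫ z in A i, ρ z ≤ 1 / N)
    (c : ℝ) (hc : ∀ i, ∫ z in A i, ρ z ≤ c) :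
    2 - 2 * N * c ≤
      ∑ i : Fin M, |(∫ z in A i, ρ z) -
        (({j | x j ∈ A i} : Finset (Fin N)).card : ℝ) / N| :=
  discretized_error_lower_bound_general hN Ω A hAmeas hdisj hcover ρ hρint hρ1 x hxΩ hone c hc
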